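/- Preconstructive reduction: for any two-node prevalent model W with nodes r < k, let W_∅ agree with W except that all predicate extensions at r are empty. Then: (i) k forces A in W_∅ iff k forces A in W; (ii) if r forces A in W_∅ then r forces A in W; consequently any formula valid in all preconstructive two-node prevalent models is valid in all two-node prevalent models. -/
import Mathlib


/-- Formulas of the (domain-extended) language of strict finitistic first-order
logic: atoms `atom P ds` (predicate symbol `P` applied to domain elements),
the existence predicate `E`, the connectives, global negation `neg`, and the
two modes (global / local) of universal and existential quantification. -/
inductive Fm (D : Type) : Type
  | top
  | bot
  | atom (P : ℕ) (ds : List D)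
  | E (d : D)
  | conj (A B : Fm D)
  | disj (A B : Fm D)
  | impl (A B : Fm D)
  | neg (A : Fm D)
  | allG (A : D → Fm D)
  | allL (A : D → Fm D)
  | exG (A : D → Fm D)
  | exL (A : D → Fm D)

/-- Weak negation `⌐A := A → ⊥`. -/
def Fm.wneg {D : Type} (A : Fm D) : Fm D := Fm.impl A Fm.bot

/-- A strict finitistic model: a rooted partially ordered Kripke frame with a
constant domain `D` and a monotone valuation of atoms (including the
existence predicate `E`). -/
structure SFModel (D : Type) : Type 1 where
  K : Type
  le : K → K → Prop
  refl : ∀ k, le k k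
  trans : ∀ {a b c}, le a b → le b c → le a c
  antisymm : ∀ {a b}, le a b → le b a → a = b
  root : K
  root_le : ∀ k, le root k
  atomVal : ℕ → List D → K → Prop
  EVal : D → K → Prop
  atom_mono : ∀ {P ds k k'}, le k k' → atomVal P ds k → atomVal P ds k'
  E_mono : ∀ {d k k'}, le k k' → EVal d k → EVal d k'

/-- The strict finitistic forcing relation `k ⊨ A`. -/
def SFModel.force {D : Type} (W : SFModel D) : W.K → Fm D → Prop
  | _, Fm.top => True
  | _, Fm.bot => False
  | k, Fm.atom P ds => W.atomVal P ds k
  | k, Fm.E d => W.EVal d k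
  | k, Fm.conj A B => W.force k A ∧ W.force k B
  | k, Fm.disj A B => W.force k A ∨ W.force k B
  | k, Fm.impl A B => ∀ k', W.le k k' → W.force k' A → ∃ k'', W.le k' k'' ∧ W.force k'' B
  | _, Fm.neg A => ∀ l, ¬ W.force l A
  | k, Fm.allG A => ∀ (d : D) (k' : W.K), W.le k k' → ∃ k'', W.le k' k'' ∧ W.force k'' (A d)
  | k, Fm.allL A => ∀ (d : D) (k' : W.K), W.le k k' → W.EVal d k' →
      ∃ k'', W.le k' k'' ∧ W.force k'' (A d)
  | k, Fm.exG A => ∃ d : D, W.force k (A d)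
  | k, Fm.exL A => ∃ d : D, W.EVal d k ∧ W.force k (A d)

/-- `A` is valid in `W`: forced at every node. -/
def SFModel.valid {D : Type} (W : SFModel D) (A : Fm D) : Prop := ∀ k, W.force k A

/-- `A` is assertible in `W`: forced at some node. -/
def SFModel.assertible {D : Type} (W : SFModel D) (A : Fm D) : Prop := ∃ k, W.force k A

/-- `A` is prevalent in `W`: above every node it is eventually forced. -/
def SFModel.prevalent {D : Type} (W : SFModel D) (A : Fm D) : Prop :=
  ∀ k, ∃ k', W.le k k' ∧ W.force k' A

/-- Atomic prevalence property: every assertible closed atom (including `E`)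
is prevalent. -/
def SFModel.atomicPrev {D : Type} (W : SFModel D) : Prop :=
  (∀ (P : ℕ) (ds : List D), W.assertible (Fm.atom P ds) → W.prevalent (Fm.atom P ds)) ∧
  (∀ d : D, W.assertible (Fm.E d) → W.prevalent (Fm.E d))

/-- Formula prevalence property: every assertible closed formula is prevalent. -/
def SFModel.formulaPrev {D : Type} (W : SFModel D) : Prop :=
  ∀ A : Fm D, W.assertible A → W.prevalent A

/-- Object prevalence property: `E(d)` is prevalent for every domain element. -/
def SFModel.objectPrev {D : Type} (W : SFModel D) : Prop :=
  ∀ d : D, W.prevalent (Fm.E d)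

/-- A prevalent model: both the formula and object prevalence properties. -/
def SFModel.prevModel {D : Type} (W : SFModel D) : Prop :=
  W.formulaPrev ∧ W.objectPrev

/-- A two-node strict finitistic model on nodes `false < true`, built from
root extensions (`aR`, `eR`) and leaf extensions (`aK`, `eK`), which must be
monotone. -/
def twoNode {D : Type} (aR aK : ℕ → List D → Prop) (eR eK : D → Prop)
    (ha : ∀ P ds, aR P ds → aK P ds) (he : ∀ d, eR d → eK d) : SFModel D where
  K := Bool
  le := (· ≤ ·)
  refl := fun k => le_refl k
  trans := fun h h' => le_trans h h'
  antisymm := fun h h' => le_antisymm h h'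
  root := false
  root_le := fun k => Bool.false_le k
  atomVal := fun P ds k => if k = true then aK P ds else aR P ds
  EVal := fun d k => if k = true then eK d else eR d
  atom_mono := by
    intro P ds k k' hle h
    cases k with
    | false =>
      cases k' with
      | false => exact h
      | true => simp only [if_neg (by decide : ¬ (false = true))] at h
                simp only [if_pos rfl]
                exact ha _ _ h
    | true =>
      cases k' with
      | false => exact absurd hle (by decide)
      | true => exact h
  E_mono := by
    intro d k k' hle h
    cases k with
    | false =>
      cases k' with
      | false => exact h
      | true => simp only [if_neg (by decide : ¬ (false = true))] at h
                simp only [if_pos rfl]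
                exact he _ h
    | true =>
      cases k' with
      | false => exact absurd hle (by decide)
      | true => exact h

/-- The preconstructive variant `W_∅` of a two-node model: all predicate
extensions at the root are emptied while the leaf's valuation is kept. -/
def twoNodeEmpty {D : Type} (aK : ℕ → List D → Prop) (eK : D → Prop) : SFModel D :=
  twoNode (fun _ _ => False) aK (fun _ => False) eK
    (fun _ _ h => h.elim) (fun _ h => h.elim)

/-- A model is preconstructive if its root forces no existence atom `E(c)`. -/
def SFModel.preconstructive {D : Type} (W : SFModel D) : Prop :=
  ∀ d : D, ¬ W.force W.root (Fm.E d)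

private lemma force_mono {D : Type} (W : SFModel D) :
    ∀ (A : Fm D) {k k' : W.K}, W.le k k' → W.force k A → W.force k' A := by
  intro A
  induction A with
  | top => intro k k' _ _; trivial
  | bot => intro k k' _ h; exact h
  | atom P ds => intro k k' hle h; exact W.atom_mono hle h
  | E d => intro k k' hle h; exact W.E_mono hle h
  | conj A B ihA ihB => intro k k' hle h; exact ⟨ihA hle h.1, ihB hle h.2⟩
  | disj A B ihA ihB => intro k k' hle h; exact h.imp (ihA hle) (ihB hle)
  | impl A B ihA ihB => intro k k' hle h k'' h2 hA; exact h k'' (W.trans hle h2) hA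
  | neg A ih => intro k k' _ h; exact h
  | allG A ih => intro k k' hle h d k'' h2; exact h d k'' (W.trans hle h2)
  | allL A ih => intro k k' hle h d k'' h2 hE; exact h d k'' (W.trans hle h2) hE
  | exG A ih => intro k k' hle h; obtain ⟨d, hd⟩ := h; exact ⟨d, ih d hle hd⟩
  | exL A ih =>
      intro k k' hle h; obtain ⟨d, hE, hd⟩ := h
      exact ⟨d, W.E_mono hle hE, ih d hle hd⟩

private lemma eq_true_of_true_le {k : Bool} (h : true ≤ k) : k = true :=
  le_antisymm (Bool.le_true _) h

private lemma key_transfer {D : Type} (aR aK : ℕ → List D → Prop) (eR eK : D → Prop)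
    (ha : ∀ P ds, aR P ds → aK P ds) (he : ∀ d, eR d → eK d) :
    ∀ A : Fm D,
      ((twoNodeEmpty aK eK).force true A ↔ (twoNode aR aK eR eK ha he).force true A) ∧
      ((twoNodeEmpty aK eK).force false A → (twoNode aR aK eR eK ha he).force false A) := by
  intro A
  induction A with
  | top => exact ⟨Iff.rfl, fun h => h⟩
  | bot => exact ⟨Iff.rfl, fun h => h⟩
  | atom P ds => exact ⟨Iff.rfl, fun h => h.elim⟩
  | E d => exact ⟨Iff.rfl, fun h => h.elim⟩
  | conj A B ihA ihB =>
      constructor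
      · exact and_congr ihA.1 ihB.1
      · exact fun h => ⟨ihA.2 h.1, ihB.2 h.2⟩
  | disj A B ihA ihB =>
      constructor
      · exact or_congr ihA.1 ihB.1
      · exact fun h => h.imp ihA.2 ihB.2
  | impl A B ihA ihB =>
      constructor
      · constructor
        · intro h k' hk' hA
          have hk : k' = true := eq_true_of_true_le hk'
          subst hk
          obtain ⟨k'', hk'', hB⟩ := h true (le_refl _) (ihA.1.mpr hA)
          have hk2 : k'' = true := eq_true_of_true_le hk''
          subst hk2
          exact ⟨true, le_refl _, ihB.1.mp hB⟩
        · intro h k' hk' hA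
          have hk : k' = true := eq_true_of_true_le hk'
          subst hk
          obtain ⟨k'', hk'', hB⟩ := h true (le_refl _) (ihA.1.mp hA)
          have hk2 : k'' = true := eq_true_of_true_le hk''
          subst hk2
          exact ⟨true, le_refl _, ihB.1.mpr hB⟩
      · intro h k' hk' hA
        have hA' : (twoNode aR aK eR eK ha he).force true A :=
          force_mono _ A (Bool.le_true k') hA
        obtain ⟨k'', hk'', hB⟩ := h true (Bool.false_le true) (ihA.1.mpr hA')
        have hk2 : k'' = true := eq_true_of_true_le hk''
        subst hk2
        exact ⟨true, Bool.le_true k', ihB.1.mp hB⟩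
  | neg A ih =>
      constructor
      · constructor
        · intro h l hl
          have hl' : (twoNode aR aK eR eK ha he).force true A :=
            force_mono _ A (Bool.le_true l) hl
          exact h true (ih.1.mpr hl')
        · intro h l hl
          cases l with
          | false => exact h false (ih.2 hl)
          | true => exact h true (ih.1.mp hl)
      · intro h l hl
        have hl' : (twoNode aR aK eR eK ha he).force true A :=
          force_mono _ A (Bool.le_true l) hl
        exact h true (ih.1.mpr hl')
  | allG A ih =>
      constructor
      · constructor
        · intro h d k' hk'
          have hk : k' = true := eq_true_of_true_le hk'
          subst hk
          obtain ⟨k'', hk'', hd⟩ := h d true (le_refl _)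
          have hk2 : k'' = true := eq_true_of_true_le hk''
          subst hk2
          exact ⟨true, le_refl _, (ih d).1.mp hd⟩
        · intro h d k' hk'
          have hk : k' = true := eq_true_of_true_le hk'
          subst hk
          obtain ⟨k'', hk'', hd⟩ := h d true (le_refl _)
          have hk2 : k'' = true := eq_true_of_true_le hk''
          subst hk2
          exact ⟨true, le_refl _, (ih d).1.mpr hd⟩
      · intro h d k' hk'
        obtain ⟨k'', hk'', hd⟩ := h d k' hk'
        cases k'' with
        | false => exact ⟨false, hk'', (ih d).2 hd⟩
        | true => exact ⟨true, hk'', (ih d).1.mp hd⟩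
  | allL A ih =>
      constructor
      · constructor
        · intro h d k' hk' hE
          have hk : k' = true := eq_true_of_true_le hk'
          subst hk
          obtain ⟨k'', hk'', hd⟩ := h d true (le_refl _) hE
          have hk2 : k'' = true := eq_true_of_true_le hk''
          subst hk2
          exact ⟨true, le_refl _, (ih d).1.mp hd⟩
        · intro h d k' hk' hE
          have hk : k' = true := eq_true_of_true_le hk'
          subst hk
          obtain ⟨k'', hk'', hd⟩ := h d true (le_refl _) hE
          have hk2 : k'' = true := eq_true_of_true_le hk''
          subst hk2
          exact ⟨true, le_refl _, (ih d).1.mpr hd⟩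
      · intro h d k' hk' hE
        cases k' with
        | true =>
            obtain ⟨k'', hk'', hd⟩ := h d true (Bool.false_le true) hE
            have hk2 : k'' = true := eq_true_of_true_le hk''
            subst hk2
            exact ⟨true, le_refl _, (ih d).1.mp hd⟩
        | false =>
            have hE' : (twoNodeEmpty aK eK).EVal d true := he d hE
            obtain ⟨k'', hk'', hd⟩ := h d true (Bool.false_le true) hE'
            have hk2 : k'' = true := eq_true_of_true_le hk''
            subst hk2
            exact ⟨true, Bool.false_le true, (ih d).1.mp hd⟩
  | exG A ih =>
      constructor
      · exact exists_congr fun d => (ih d).1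
      · intro h; obtain ⟨d, hd⟩ := h; exact ⟨d, (ih d).2 hd⟩
  | exL A ih =>
      constructor
      · exact exists_congr fun d => and_congr Iff.rfl (ih d).1
      · intro h; obtain ⟨d, hE, _⟩ := h; exact hE.elim

/-- Preconstructive reduction: for any two-node prevalent
model `W` with nodes `r < k` and its variant `W_∅` (all predicate extensions
at `r` emptied): (i) `k` forces `A` in `W_∅` iff `k` forces `A` in `W`;
(ii) if `r` forces `A` in `W_∅` then `r` forces `A` in `W`; consequently any
formula valid in all preconstructive two-node prevalent models is valid in
all two-node prevalent models. -/
theorem preconstructive_reduction {D : Type} [Nonempty D] :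
    (∀ (aR aK : ℕ → List D → Prop) (eR eK : D → Prop)
        (ha : ∀ P ds, aR P ds → aK P ds) (he : ∀ d, eR d → eK d),
      (twoNode aR aK eR eK ha he).prevModel →
        (∀ A : Fm D,
            (twoNodeEmpty aK eK).force true A ↔ (twoNode aR aK eR eK ha he).force true A) ∧
        (∀ A : Fm D,
            (twoNodeEmpty aK eK).force false A → (twoNode aR aK eR eK ha he).force false A)) ∧
    (∀ A : Fm D,
      (∀ (aR aK : ℕ → List D → Prop) (eR eK : D → Prop)
          (ha : ∀ P ds, aR P ds → aK P ds) (he : ∀ d, eR d → eK d),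
        (twoNode aR aK eR eK ha he).prevModel →
        (twoNode aR aK eR eK ha he).preconstructive →
        (twoNode aR aK eR eK ha he).valid A) →
      (∀ (aR aK : ℕ → List D → Prop) (eR eK : D → Prop)
          (ha : ∀ P ds, aR P ds → aK P ds) (he : ∀ d, eR d → eK d),
        (twoNode aR aK eR eK ha he).prevModel →
        (twoNode aR aK eR eK ha he).valid A)) := by
  constructor
  · intro aR aK eR eK ha he _
    exact ⟨fun A => (key_transfer aR aK eR eK ha he A).1,
           fun A => (key_transfer aR aK eR eK ha he A).2⟩
  · intro A hvalid aR aK eR eK ha he hprev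
    -- W₀ is a prevalent model
    have hobj : (twoNodeEmpty aK eK).objectPrev := by
      intro d k
      obtain ⟨k', hk', h⟩ := hprev.2 d true
      have hk2 : k' = true := eq_true_of_true_le hk'
      subst hk2
      exact ⟨true, Bool.le_true k, h⟩
    have hform : (twoNodeEmpty aK eK).formulaPrev := by
      intro B hB
      obtain ⟨k, hk⟩ := hB
      have htrue : (twoNodeEmpty aK eK).force true B := by
        cases k with
        | true => exact hk
        | false =>
            have hW : (twoNode aR aK eR eK ha he).force false B :=
              (key_transfer aR aK eR eK ha he B).2 hk
            obtain ⟨k', hk', h⟩ := hprev.1 B ⟨false, hW⟩ true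
            have hk2 : k' = true := eq_true_of_true_le hk'
            subst hk2
            exact (key_transfer aR aK eR eK ha he B).1.mpr h
      intro k
      exact ⟨true, Bool.le_true k, htrue⟩
    have hpre : (twoNodeEmpty aK eK).preconstructive := fun d h => h.elim
    have hv0 : (twoNodeEmpty aK eK).valid A :=
      hvalid (fun _ _ => False) aK (fun _ => False) eK
        (fun _ _ h => h.elim) (fun _ h => h.elim) ⟨hform, hobj⟩ hpre
    intro k
    cases k with
    | false => exact (key_transfer aR aK eR eK ha he A).2 (hv0 false)
    | true => exact (key_transfer aR aK eR eK ha he A).1.mp (hv0 true)
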